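/- Let d = ⟨d_0, …, d_{ℓ−1}⟩ be an extended regular representation of a natural number n, and let i be an index with 0 ≤ i ≤ ℓ − 1. Then 2^i ≤ n, and there exists an extended regular representation d' of n − 2^i such that the length of d' is at least ℓ − 2 and at most ℓ, and, after padding the shorter of d and d' with trailing zeros, the two strings differ in at most 4 positions. -/

import Mathlib

/-- The value `Σ_{i<ℓ} d_i · 2^i` of a digit string. -/
def digitVal (d : List ℕ) : ℕ := ∑ i ∈ Finset.range d.length, d.getD i 0 * 2 ^ i

/-- A digit string `⟨d_0, …, d_{ℓ−1}⟩` is extended regular if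
(i) every `3` is preceded by a `0` or a `1` with only `2`'s in between, and
(ii) every `0` is preceded by a `2` or a `3` with only `1`'s in between. -/
def ExtReg (d : List ℕ) : Prop :=
  (∀ j < d.length, d.getD j 0 = 3 →
      ∃ k < j, (d.getD k 0 = 0 ∨ d.getD k 0 = 1) ∧
        ∀ m, k < m → m < j → d.getD m 0 = 2) ∧
  (∀ j < d.length, d.getD j 0 = 0 →
      ∃ k < j, (d.getD k 0 = 2 ∨ d.getD k 0 = 3) ∧
        ∀ m, k < m → m < j → d.getD m 0 = 1)

/-- An extended regular representation of a natural number `n`: an extended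
regular digit string with digits at most `3`, whose last digit is nonzero
(the number `0` is represented by the empty string), and whose value is `n`. -/
def IsExtRegRep (d : List ℕ) (n : ℕ) : Prop :=
  (∀ x ∈ d, x ≤ 3) ∧ ExtReg d ∧ (d ≠ [] → d.getLastD 0 ≠ 0) ∧ digitVal d = n

/-- The number of positions at which two digit strings differ, after padding
the shorter one with trailing zeros. -/
def diffCount (d d' : List ℕ) : ℕ :=
  ((Finset.range (max d.length d'.length)).filter
    (fun k => d.getD k 0 ≠ d'.getD k 0)).card

/-!
Extended regularity can be checked by reading the digits from the least significant end while
remembering two bits: whether a `3` may come next (the last digit other than `2` is a `0` or a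
`1`) and whether a `0` may come next (the last digit other than `1` is a `2` or a `3`). Every
transition is monotone in these bits, so a prefix may be replaced by one that is regular and
permits at least as much without affecting the regularity of what follows.

Subtracting `2 ^ p` is then a local rewrite around position `p`: a `3` becomes `2`; a `1` that
may not be followed by a `0` becomes `2` and borrows from the next digit; otherwise the digit
drops by one, and if the block of `1`s above it ends in a `0`, which would lose its guard, that
`0 w` becomes `2 (w - 1)`. A digit `0` at `p` is first raised to `1`, and `2 ^ (p + 1)` is
subtracted instead. Finally trailing zeros are dropped; regular strings have no two adjacent
zeros, so this loses at most one digit, or two when the top digit `1` is removed.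
-/

def Guarded (d : List ℕ) (j : ℕ) (P Q : ℕ → Prop) : Prop :=
  ∃ k < j, P (d.getD k 0) ∧ ∀ m, k < m → m < j → Q (d.getD m 0)

def CanAppendThree (d : List ℕ) : Prop :=
  Guarded d d.length (fun y => y = 0 ∨ y = 1) (· = 2)

def CanAppendZero (d : List ℕ) : Prop :=
  Guarded d d.length (fun y => y = 2 ∨ y = 3) (· = 1)

lemma extReg_iff_guarded (d : List ℕ) :
    ExtReg d ↔
      (∀ j < d.length, d.getD j 0 = 3 → Guarded d j (fun y => y = 0 ∨ y = 1) (· = 2)) ∧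
      (∀ j < d.length, d.getD j 0 = 0 → Guarded d j (fun y => y = 2 ∨ y = 3) (· = 1)) :=
  Iff.rfl

lemma guarded_append_singleton {d : List ℕ} {x j : ℕ} (hj : j ≤ d.length)
    (P Q : ℕ → Prop) :
    Guarded (d ++ [x]) j P Q ↔ Guarded d j P Q := by
  have h : ∀ k < j, (d ++ [x]).getD k 0 = d.getD k 0 :=
    fun k hk => List.getD_append _ _ _ _ (by omega)
  refine exists_congr fun k => and_congr_right fun hk => and_congr (by rw [h k hk]) ?_
  exact forall_congr' fun m => imp_congr_right fun _ => forall_congr' fun hm => by rw [h m hm]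

lemma guarded_append_singleton_length (d : List ℕ) (x : ℕ) (P Q : ℕ → Prop) :
    Guarded (d ++ [x]) (d.length + 1) P Q ↔ P x ∨ (Q x ∧ Guarded d d.length P Q) := by
  have hx : (d ++ [x]).getD d.length 0 = x := by simp
  have hd : ∀ j < d.length, (d ++ [x]).getD j 0 = d.getD j 0 :=
    fun j hj => List.getD_append _ _ _ _ hj
  constructor
  · rintro ⟨k, hk, hP, hQ⟩
    rcases Nat.lt_succ_iff_lt_or_eq.mp hk with hk | rfl
    · refine Or.inr ⟨hx ▸ hQ _ hk (by omega), k, hk, hd k hk ▸ hP, fun m h₁ h₂ => ?_⟩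
      exact hd m h₂ ▸ hQ m h₁ (by omega)
    · exact Or.inl (hx ▸ hP)
  · rintro (hP | ⟨hQx, k, hk, hP, hQ⟩)
    · exact ⟨d.length, by omega, hx.symm ▸ hP, fun m h₁ h₂ => by omega⟩
    · refine ⟨k, by omega, (hd k hk).symm ▸ hP, fun m h₁ h₂ => ?_⟩
      rcases Nat.lt_succ_iff_lt_or_eq.mp h₂ with h₂ | rfl
      · exact (hd m h₂).symm ▸ hQ m h₁ h₂
      · exact hx.symm ▸ hQx

lemma extReg_append_singleton (d : List ℕ) (x : ℕ) :
    ExtReg (d ++ [x]) ↔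
      ExtReg d ∧ (x = 3 → CanAppendThree d) ∧ (x = 0 → CanAppendZero d) := by
  have hx : (d ++ [x]).getD d.length 0 = x := by simp
  have hd : ∀ j < d.length, (d ++ [x]).getD j 0 = d.getD j 0 :=
    fun j hj => List.getD_append _ _ _ _ hj
  simp only [extReg_iff_guarded, CanAppendThree, CanAppendZero, List.length_append,
    List.length_singleton, Nat.forall_lt_succ_right, hx]
  simp +contextual (disch := omega) only [hd, guarded_append_singleton]
  tauto

lemma canAppendThree_append_singleton (d : List ℕ) (x : ℕ) :
    CanAppendThree (d ++ [x]) ↔ x = 0 ∨ x = 1 ∨ (x = 2 ∧ CanAppendThree d) := by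
  simp [CanAppendThree, guarded_append_singleton_length, or_assoc]

lemma canAppendZero_append_singleton (d : List ℕ) (x : ℕ) :
    CanAppendZero (d ++ [x]) ↔ x = 2 ∨ x = 3 ∨ (x = 1 ∧ CanAppendZero d) := by
  simp [CanAppendZero, guarded_append_singleton_length, or_assoc]

lemma extReg_append_replicate_one (d : List ℕ) (k : ℕ) :
    ExtReg (d ++ List.replicate k 1) ↔ ExtReg d := by
  induction k with
  | zero => simp
  | succ k ih =>
    rw [List.replicate_succ', ← List.append_assoc, extReg_append_singleton, ih]
    simp

lemma canAppendThree_append_replicate_one (d : List ℕ) (k : ℕ) :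
    CanAppendThree (d ++ List.replicate k 1) ↔ k ≠ 0 ∨ CanAppendThree d := by
  cases k with
  | zero => simp
  | succ k =>
    rw [List.replicate_succ', ← List.append_assoc, canAppendThree_append_singleton]
    simp

lemma canAppendZero_append_replicate_one (d : List ℕ) (k : ℕ) :
    CanAppendZero (d ++ List.replicate k 1) ↔ CanAppendZero d := by
  induction k with
  | zero => simp
  | succ k ih =>
    rw [List.replicate_succ', ← List.append_assoc, canAppendZero_append_singleton, ih]
    simp

lemma ExtReg.of_append {u v : List ℕ} (h : ExtReg (u ++ v)) : ExtReg u := by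
  induction v using List.reverseRecOn with
  | nil => simpa using h
  | append_singleton v x ih =>
    rw [← List.append_assoc, extReg_append_singleton] at h
    exact ih h.1

lemma not_extReg_append_zero_zero (u : List ℕ) : ¬ExtReg (u ++ [0] ++ [0]) := by
  simp only [extReg_append_singleton, canAppendZero_append_singleton]
  simp

/-- As a prefix of an extended regular string, `v` may replace `u`. -/
def ExtRegPrefixLE (u v : List ℕ) : Prop :=
  ExtReg u → ExtReg v ∧ (CanAppendThree u → CanAppendThree v) ∧
    (CanAppendZero u → CanAppendZero v)

lemma ExtRegPrefixLE.append_singleton {u v : List ℕ} (h : ExtRegPrefixLE u v) (x : ℕ) :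
    ExtRegPrefixLE (u ++ [x]) (v ++ [x]) := by
  intro hu
  rw [extReg_append_singleton] at hu
  obtain ⟨hv, h₃, h₀⟩ := h hu.1
  simp only [extReg_append_singleton, canAppendThree_append_singleton,
    canAppendZero_append_singleton]
  tauto

lemma ExtRegPrefixLE.append {u v : List ℕ} (h : ExtRegPrefixLE u v) (b : List ℕ) :
    ExtRegPrefixLE (u ++ b) (v ++ b) := by
  induction b using List.reverseRecOn with
  | nil => simpa using h
  | append_singleton b x ih => simpa only [← List.append_assoc] using ih.append_singleton x

lemma ExtRegPrefixLE.extReg_append {u v b : List ℕ} (h : ExtRegPrefixLE u v)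
    (hu : ExtReg (u ++ b)) :
    ExtReg (v ++ b) :=
  (h.append b hu).1

section Moves

variable (a : List ℕ)

lemma extRegPrefixLE_zero_one : ExtRegPrefixLE (a ++ [0]) (a ++ [1]) := by
  simp only [ExtRegPrefixLE, extReg_append_singleton, canAppendThree_append_singleton,
    canAppendZero_append_singleton]
  simp_all

lemma extRegPrefixLE_three_two : ExtRegPrefixLE (a ++ [3]) (a ++ [2]) := by
  simp only [ExtRegPrefixLE, extReg_append_singleton, canAppendThree_append_singleton,
    canAppendZero_append_singleton]
  simp_all

lemma extRegPrefixLE_one_carry {x : ℕ} (hx₁ : 1 ≤ x) (hx₃ : x ≤ 3)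
    (ha : ¬CanAppendZero a) :
    ExtRegPrefixLE (a ++ [1] ++ [x]) (a ++ [2] ++ [x - 1]) := by
  rcases (by omega : x = 1 ∨ x = 2 ∨ x = 3) with rfl | rfl | rfl <;>
  · simp only [ExtRegPrefixLE, extReg_append_singleton, canAppendThree_append_singleton,
      canAppendZero_append_singleton]
    simp_all

lemma extRegPrefixLE_borrow_zero {v w : ℕ} (k : ℕ) (hv₁ : 1 ≤ v) (hv₂ : v ≤ 2)
    (hw₁ : 1 ≤ w) (hw₃ : w ≤ 3) :
    ExtRegPrefixLE (a ++ [v] ++ List.replicate k 1 ++ [0] ++ [w])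
      (a ++ [v - 1] ++ List.replicate k 1 ++ [2] ++ [w - 1]) := by
  rcases (by omega : v = 1 ∨ v = 2) with rfl | rfl <;>
  rcases (by omega : w = 1 ∨ w = 2 ∨ w = 3) with rfl | rfl | rfl <;>
  · simp only [ExtRegPrefixLE, extReg_append_singleton, canAppendThree_append_singleton,
      canAppendZero_append_singleton, extReg_append_replicate_one,
      canAppendThree_append_replicate_one, canAppendZero_append_replicate_one]
    simp_all

lemma extRegPrefixLE_ones_before_two_or_three {v y : ℕ} (k : ℕ) (hv₁ : 1 ≤ v)
    (hv₂ : v ≤ 2) (hy : y = 2 ∨ y = 3) (ha : v = 1 → CanAppendZero a) :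
    ExtRegPrefixLE (a ++ [v] ++ List.replicate k 1 ++ [y])
      (a ++ [v - 1] ++ List.replicate k 1 ++ [y]) := by
  rcases (by omega : v = 1 ∨ v = 2) with rfl | rfl <;> rcases hy with rfl | rfl <;>
  · simp only [ExtRegPrefixLE, extReg_append_singleton, canAppendThree_append_singleton,
      canAppendZero_append_singleton, extReg_append_replicate_one,
      canAppendThree_append_replicate_one, canAppendZero_append_replicate_one]
    simp_all

lemma extReg_pred_append_replicate_one {v : ℕ} (k : ℕ) (hv₁ : 1 ≤ v) (hv₂ : v ≤ 2)
    (ha : v = 1 → CanAppendZero a) (h : ExtReg (a ++ [v] ++ List.replicate k 1)) :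
    ExtReg (a ++ [v - 1] ++ List.replicate k 1) := by
  rcases (by omega : v = 1 ∨ v = 2) with rfl | rfl <;>
  · simp only [extReg_append_singleton, extReg_append_replicate_one] at h ⊢
    simp_all

end Moves

lemma digitVal_eq_ofDigits (d : List ℕ) : digitVal d = Nat.ofDigits 2 d := by
  induction d with
  | nil => simp [digitVal]
  | cons x d ih =>
    rw [Nat.ofDigits_cons, ← ih, digitVal, digitVal, List.length_cons, Finset.sum_range_succ',
      Finset.mul_sum]
    simp only [List.getD_cons_succ, List.getD_cons_zero, pow_succ, pow_zero, mul_one]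
    rw [add_comm]
    congr 1
    exact Finset.sum_congr rfl fun i _ => by ring

lemma diffCount_eq_card_filter {d d' : List ℕ} {N : ℕ} (h : d.length ≤ N)
    (h' : d'.length ≤ N) :
    diffCount d d' = ((Finset.range N).filter fun k => d.getD k 0 ≠ d'.getD k 0).card := by
  unfold diffCount
  congr 1
  ext k
  simp only [Finset.mem_filter, Finset.mem_range]
  refine ⟨fun hk => ⟨by omega, hk.2⟩, fun hk => ⟨?_, hk.2⟩⟩
  by_contra hlt
  exact hk.2 (by rw [List.getD_eq_default _ _ (by omega), List.getD_eq_default _ _ (by omega)])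

lemma diffCount_cons (x y : ℕ) (u v : List ℕ) :
    diffCount (x :: u) (y :: v) = (if x = y then 0 else 1) + diffCount u v := by
  rw [diffCount_eq_card_filter (N := max u.length v.length + 1) (by simp) (by simp),
    diffCount_eq_card_filter (N := max u.length v.length) (by simp) (by simp),
    Finset.card_filter, Finset.card_filter, Finset.sum_range_succ']
  simp only [List.getD_cons_succ, List.getD_cons_zero]
  split_ifs <;> simp_all [add_comm]

lemma diffCount_append_left (a u v : List ℕ) : diffCount (a ++ u) (a ++ v) = diffCount u v := by
  induction a with
  | nil => rfl
  | cons x a ih => simp [diffCount_cons, ih]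

lemma diffCount_self (u : List ℕ) : diffCount u u = 0 := by
  simp [diffCount]

lemma diffCount_triangle (d e f : List ℕ) : diffCount d f ≤ diffCount d e + diffCount e f := by
  set N := max (max d.length e.length) f.length
  rw [diffCount_eq_card_filter (N := N) (by omega) (by omega),
    diffCount_eq_card_filter (N := N) (by omega) (by omega),
    diffCount_eq_card_filter (N := N) (by omega) (by omega)]
  refine (Finset.card_le_card fun k hk => ?_).trans (Finset.card_union_le _ _)
  simp only [Finset.mem_union, Finset.mem_filter] at hk ⊢
  by_cases hde : d.getD k 0 = e.getD k 0
  · exact Or.inr ⟨hk.1, hde ▸ hk.2⟩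
  · exact Or.inl ⟨hk.1, hde⟩

lemma diffCount_congr_right {d e e' : List ℕ} (h : ∀ k, e.getD k 0 = e'.getD k 0) :
    diffCount d e = diffCount d e' := by
  set N := max (max d.length e.length) e'.length
  rw [diffCount_eq_card_filter (N := N) (by omega) (by omega),
    diffCount_eq_card_filter (N := N) (by omega) (by omega)]
  simp only [h]

def dropTrailingZeros (e : List ℕ) : List ℕ := e.rdropWhile (· == 0)

lemma exists_eq_dropTrailingZeros_append (e : List ℕ) :
    ∃ m, e = dropTrailingZeros e ++ List.replicate m 0 := by
  refine ⟨(e.rtakeWhile (· == 0)).length, ?_⟩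
  have hzeros : e.rtakeWhile (· == 0) = List.replicate (e.rtakeWhile (· == 0)).length 0 :=
    List.eq_replicate_of_mem fun x hx => by simpa using List.mem_rtakeWhile_imp hx
  rw [dropTrailingZeros, ← hzeros, List.rdropWhile_append_rtakeWhile]

lemma getD_dropTrailingZeros (e : List ℕ) (k : ℕ) :
    (dropTrailingZeros e).getD k 0 = e.getD k 0 := by
  obtain ⟨m, hm⟩ := exists_eq_dropTrailingZeros_append e
  conv_rhs => rw [hm]
  rcases lt_or_ge k (dropTrailingZeros e).length with hk | hk
  · rw [List.getD_append _ _ _ _ hk]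
  · rw [List.getD_append_right _ _ _ _ hk, List.getD_eq_default _ _ hk,
      List.getD_eq_getElem?_getD, List.getElem?_getD_replicate_default_eq]

lemma length_dropTrailingZeros_le (e : List ℕ) : (dropTrailingZeros e).length ≤ e.length :=
  (List.rdropWhile_prefix _ e).length_le

lemma ExtReg.length_le_length_dropTrailingZeros_add_one {e : List ℕ} (he : ExtReg e) :
    e.length ≤ (dropTrailingZeros e).length + 1 := by
  obtain ⟨m, hm⟩ := exists_eq_dropTrailingZeros_append e
  by_contra hlt
  have hlen := congrArg List.length hm
  obtain ⟨j, rfl⟩ : ∃ j, m = j + 2 := ⟨m - 2, by simp at hlen; omega⟩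
  rw [hm] at he
  exact not_extReg_append_zero_zero (dropTrailingZeros e ++ List.replicate j 0)
    (by simpa [List.replicate_add] using he)

lemma isExtRegRep_dropTrailingZeros {e : List ℕ} (h3 : ∀ x ∈ e, x ≤ 3) (he : ExtReg e) :
    IsExtRegRep (dropTrailingZeros e) (digitVal e) := by
  obtain ⟨t, ht⟩ := List.rdropWhile_prefix (· == 0) e
  refine ⟨fun x hx => h3 x (ht ▸ List.mem_append_left t hx), ExtReg.of_append (ht ▸ he),
    fun hne => ?_, ?_⟩
  · rw [List.getLastD_eq_getLast?, List.getLast?_eq_some_getLast hne]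
    simpa [dropTrailingZeros] using List.rdropWhile_last_not (· == 0) e hne
  · obtain ⟨m, hm⟩ := exists_eq_dropTrailingZeros_append e
    conv_rhs => rw [hm]
    simp [digitVal_eq_ofDigits]

lemma exists_eq_replicate_one_append (b : List ℕ) :
    ∃ k r, b = List.replicate k 1 ++ r ∧ r.head? ≠ some 1 := by
  induction b with
  | nil => exact ⟨0, [], by simp⟩
  | cons x b ih =>
    by_cases hx : x = 1
    · obtain ⟨k, r, rfl, hr⟩ := ih
      exact ⟨k + 1, r, by simp [hx, List.replicate_succ], hr⟩
    · exact ⟨0, x :: b, by simp, by simpa using hx⟩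

def IsInPlaceDecrement (c : List ℕ) (p : ℕ) (e : List ℕ) : Prop :=
  (∀ x ∈ e, x ≤ 3) ∧ ExtReg e ∧ e.length = c.length ∧ digitVal e + 2 ^ p = digitVal c ∧
    diffCount c e ≤ 3

section InPlace

variable {a b : List ℕ}

lemma isInPlaceDecrement_three (h3 : ∀ x ∈ a ++ 3 :: b, x ≤ 3)
    (hreg : ExtReg (a ++ 3 :: b)) :
    IsInPlaceDecrement (a ++ 3 :: b) a.length (a ++ 2 :: b) := by
  refine ⟨?_, ?_, by simp, ?_, ?_⟩
  · simp only [List.mem_append, List.mem_cons] at h3 ⊢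
    rintro x (hx | rfl | hx) <;> simp_all
  · simpa using (extRegPrefixLE_three_two a).extReg_append (b := b) (by simpa using hreg)
  · simp only [digitVal_eq_ofDigits, Nat.ofDigits_append, Nat.ofDigits_cons]; ring
  · simp [diffCount_append_left, diffCount_cons, diffCount_self]

lemma isInPlaceDecrement_carry {x : ℕ} (h3 : ∀ y ∈ a ++ 1 :: x :: b, y ≤ 3)
    (hreg : ExtReg (a ++ 1 :: x :: b)) (ha : ¬CanAppendZero a) :
    IsInPlaceDecrement (a ++ 1 :: x :: b) a.length (a ++ 2 :: (x - 1) :: b) := by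
  have hreg' : ExtReg (a ++ [1] ++ [x] ++ b) := by simpa using hreg
  have hx : 1 ≤ x := by
    by_contra hx0
    have := hreg'.of_append
    simp only [extReg_append_singleton, canAppendZero_append_singleton] at this
    simp_all
  have hx3 : x ≤ 3 := h3 x (by simp)
  refine ⟨?_, ?_, by simp, ?_, ?_⟩
  · intro y hy
    simp only [List.mem_append, List.mem_cons] at h3 hy
    rcases hy with hy | rfl | rfl | hy <;> first | omega | simp_all
  · simpa using (extRegPrefixLE_one_carry a hx hx3 ha).extReg_append hreg'
  · obtain ⟨x, rfl⟩ := Nat.exists_eq_add_of_le' hx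
    simp only [digitVal_eq_ofDigits, Nat.ofDigits_append, Nat.ofDigits_cons,
      Nat.add_sub_cancel]
    ring
  · simp only [diffCount_append_left, diffCount_cons, diffCount_self]
    split_ifs <;> omega

lemma isInPlaceDecrement_borrow {v w k : ℕ} {r : List ℕ}
    (h3 : ∀ y ∈ a ++ v :: (List.replicate k 1 ++ 0 :: w :: r), y ≤ 3)
    (hreg : ExtReg (a ++ v :: (List.replicate k 1 ++ 0 :: w :: r))) (hv₁ : 1 ≤ v)
    (hv₂ : v ≤ 2) :
    IsInPlaceDecrement (a ++ v :: (List.replicate k 1 ++ 0 :: w :: r)) a.length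
      (a ++ (v - 1) :: (List.replicate k 1 ++ 2 :: (w - 1) :: r)) := by
  have hreg' : ExtReg (a ++ [v] ++ List.replicate k 1 ++ [0] ++ [w] ++ r) := by
    simpa using hreg
  have hw : 1 ≤ w := by
    by_contra hw0
    obtain rfl : w = 0 := by omega
    exact not_extReg_append_zero_zero _ hreg'.of_append
  have hw3 : w ≤ 3 := h3 w (by simp)
  refine ⟨?_, ?_, by simp, ?_, ?_⟩
  · intro y hy
    simp only [List.mem_append, List.mem_cons, List.mem_replicate] at h3 hy
    rcases hy with hy | rfl | ⟨-, rfl⟩ | rfl | rfl | hy <;> first | omega | simp_all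
  · simpa using (extRegPrefixLE_borrow_zero a k hv₁ hv₂ hw hw3).extReg_append hreg'
  · obtain ⟨v, rfl⟩ := Nat.exists_eq_add_of_le' hv₁
    obtain ⟨w, rfl⟩ := Nat.exists_eq_add_of_le' hw
    simp only [digitVal_eq_ofDigits, Nat.ofDigits_append, Nat.ofDigits_cons,
      Nat.add_sub_cancel]
    ring
  · simp only [diffCount_append_left, diffCount_cons, diffCount_self]
    split_ifs <;> omega

lemma isInPlaceDecrement_ones {v k : ℕ} {r : List ℕ}
    (h3 : ∀ y ∈ a ++ v :: (List.replicate k 1 ++ r), y ≤ 3)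
    (hreg : ExtReg (a ++ v :: (List.replicate k 1 ++ r))) (hv₁ : 1 ≤ v) (hv₂ : v ≤ 2)
    (ha : v = 1 → CanAppendZero a) (hr : ∀ y ∈ r.head?, y = 2 ∨ y = 3) :
    IsInPlaceDecrement (a ++ v :: (List.replicate k 1 ++ r)) a.length
      (a ++ (v - 1) :: (List.replicate k 1 ++ r)) := by
  refine ⟨?_, ?_, by simp, ?_, ?_⟩
  · intro y hy
    simp only [List.mem_append, List.mem_cons] at h3 hy
    rcases hy with hy | rfl | hy <;> first | omega | simp_all
  · cases r with
    | nil =>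
      simpa using extReg_pred_append_replicate_one a k hv₁ hv₂ ha (by simpa using hreg)
    | cons y r =>
      have hreg' : ExtReg (a ++ [v] ++ List.replicate k 1 ++ [y] ++ r) := by
        simpa using hreg
      simpa using
        (extRegPrefixLE_ones_before_two_or_three a k hv₁ hv₂ (hr y rfl) ha).extReg_append hreg'
  · obtain ⟨v, rfl⟩ := Nat.exists_eq_add_of_le' hv₁
    simp only [digitVal_eq_ofDigits, Nat.ofDigits_append, Nat.ofDigits_cons,
      Nat.add_sub_cancel]
    ring
  · simp only [diffCount_append_left, diffCount_cons, diffCount_self]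
    split_ifs <;> omega

end InPlace

lemma exists_isInPlaceDecrement {a b : List ℕ} {v : ℕ} (hv : v ≠ 0)
    (h3 : ∀ x ∈ a ++ v :: b, x ≤ 3) (hreg : ExtReg (a ++ v :: b))
    (hlast : b.getLast? ≠ some 0) (htop : b = [] → v ≠ 1) :
    ∃ e, IsInPlaceDecrement (a ++ v :: b) a.length e := by
  have hv3 : v ≤ 3 := h3 v (by simp)
  by_cases hv₃ : v = 3
  · subst hv₃
    exact ⟨_, isInPlaceDecrement_three h3 hreg⟩
  by_cases hcarry : v = 1 ∧ ¬CanAppendZero a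
  · obtain ⟨rfl, ha⟩ := hcarry
    obtain ⟨x, b, rfl⟩ := List.exists_cons_of_ne_nil fun hb => htop hb rfl
    exact ⟨_, isInPlaceDecrement_carry h3 hreg ha⟩
  have ha : v = 1 → CanAppendZero a := by tauto
  obtain ⟨k, r, rfl, hr⟩ := exists_eq_replicate_one_append b
  match r, hr with
  | [], _ => exact ⟨_, isInPlaceDecrement_ones h3 hreg (by omega) (by omega) ha (by simp)⟩
  | [0], _ => simp at hlast
  | 0 :: w :: r, _ => exact ⟨_, isInPlaceDecrement_borrow h3 hreg (by omega) (by omega)⟩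
  | (y + 1) :: r, hr =>
    have hy : y + 1 ≤ 3 := h3 (y + 1) (by simp)
    refine ⟨_, isInPlaceDecrement_ones h3 hreg (by omega) (by omega) ha ?_⟩
    simp only [List.head?_cons, Option.mem_def, Option.some.injEq, forall_eq']
    simp at hr
    omega

def IsDecrement (d : List ℕ) (i r : ℕ) (d' : List ℕ) : Prop :=
  IsExtRegRep d' (digitVal d - 2 ^ i) ∧ 2 ^ i ≤ digitVal d ∧ d.length - 2 ≤ d'.length ∧
    d'.length ≤ d.length ∧ diffCount d d' ≤ r

lemma IsDecrement.mono {d d' : List ℕ} {i r s : ℕ} (h : IsDecrement d i r d') (hrs : r ≤ s) :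
    IsDecrement d i s d' :=
  ⟨h.1, h.2.1, h.2.2.1, h.2.2.2.1, h.2.2.2.2.trans hrs⟩

lemma isDecrement_append_one {a : List ℕ} (h3 : ∀ x ∈ a ++ [1], x ≤ 3)
    (hreg : ExtReg (a ++ [1])) : IsDecrement (a ++ [1]) a.length 3 (dropTrailingZeros a) := by
  have ha : ExtReg a := hreg.of_append
  have hval : digitVal (a ++ [1]) = digitVal a + 2 ^ a.length := by
    simp [digitVal_eq_ofDigits, Nat.ofDigits_append]
  obtain ⟨h3', hreg', hlast', hval'⟩ :=
    isExtRegRep_dropTrailingZeros (fun x hx => h3 x (by simp [hx])) ha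
  have hlen := ha.length_le_length_dropTrailingZeros_add_one
  refine ⟨⟨h3', hreg', hlast', by omega⟩, by omega, ?_,
    (length_dropTrailingZeros_le a).trans (by simp), ?_⟩
  · simp only [List.length_append, List.length_singleton]; omega
  · calc diffCount (a ++ [1]) (dropTrailingZeros a) = diffCount (a ++ [1]) (a ++ []) := by
          rw [diffCount_congr_right (getD_dropTrailingZeros a), List.append_nil]
      _ ≤ 3 := by rw [diffCount_append_left]; decide

lemma IsInPlaceDecrement.isDecrement_dropTrailingZeros {c e : List ℕ} {p : ℕ}
    (h : IsInPlaceDecrement c p e) : IsDecrement c p 3 (dropTrailingZeros e) := by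
  obtain ⟨h3, hreg, hlen, hval, hdiff⟩ := h
  obtain ⟨h3', hreg', hlast', hval'⟩ := isExtRegRep_dropTrailingZeros h3 hreg
  have hlen' := hreg.length_le_length_dropTrailingZeros_add_one
  refine ⟨⟨h3', hreg', hlast', by omega⟩, by omega, by omega,
    (length_dropTrailingZeros_le e).trans hlen.le, ?_⟩
  rwa [diffCount_congr_right (getD_dropTrailingZeros e)]

lemma exists_isDecrement_of_ne_zero {a b : List ℕ} {v n : ℕ} (hv : v ≠ 0)
    (hc : IsExtRegRep (a ++ v :: b) n) : ∃ d', IsDecrement (a ++ v :: b) a.length 3 d' := by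
  obtain ⟨h3, hreg, hlast, -⟩ := hc
  by_cases htop : b = [] ∧ v = 1
  · obtain ⟨rfl, rfl⟩ := htop
    exact ⟨_, isDecrement_append_one h3 hreg⟩
  have hb : b.getLast? ≠ some 0 := by
    intro hb
    obtain ⟨b, rfl⟩ := List.getLast?_eq_some_iff.mp hb
    rw [← List.cons_append, ← List.append_assoc, List.getLastD_concat] at hlast
    exact hlast (by simp) rfl
  obtain ⟨e, he⟩ := exists_isInPlaceDecrement hv h3 hreg hb fun hb hv => htop ⟨hb, hv⟩
  exact ⟨_, he.isDecrement_dropTrailingZeros⟩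

lemma isExtRegRep_raise_zero {a b : List ℕ} {w n : ℕ} (hc : IsExtRegRep (a ++ 0 :: w :: b) n) :
    IsExtRegRep ((a ++ [1]) ++ w :: b) (n + 2 ^ a.length) := by
  obtain ⟨h3, hreg, hlast, rfl⟩ := hc
  refine ⟨?_, ?_, ?_, ?_⟩
  · intro x hx
    simp only [List.mem_append, List.mem_cons, List.not_mem_nil, or_false] at hx h3
    rcases hx with (hx | rfl) | rfl | hx <;> simp_all
  · simpa using (extRegPrefixLE_zero_one a).extReg_append (b := w :: b) (by simpa using hreg)
  · intro _
    simpa [List.getLastD_eq_getLast?, List.getLast?_append] using hlast (by simp)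
  · simp only [digitVal_eq_ofDigits, Nat.ofDigits_append, Nat.ofDigits_cons]
    simp
    ring

lemma exists_isDecrement_of_eq_zero {a b : List ℕ} {n : ℕ} (hc : IsExtRegRep (a ++ 0 :: b) n) :
    ∃ d', IsDecrement (a ++ 0 :: b) a.length 4 d' := by
  have ⟨_, hreg, hlast, hn⟩ := hc
  obtain ⟨w, b, rfl⟩ : ∃ w b', b = w :: b' := by
    refine List.exists_cons_of_ne_nil fun hb => ?_
    subst hb
    rw [List.getLastD_concat] at hlast
    exact hlast (by simp) rfl
  have hw : w ≠ 0 := by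
    rintro rfl
    exact not_extReg_append_zero_zero a (ExtReg.of_append (v := b) (by simpa using hreg))
  have hc' := isExtRegRep_raise_zero hc
  obtain ⟨d', hd', hpow, hlen₁, hlen₂, hdiff⟩ := exists_isDecrement_of_ne_zero hw hc'
  have hstep : diffCount (a ++ 0 :: w :: b) ((a ++ [1]) ++ w :: b) = 1 := by
    simp [diffCount_append_left, diffCount_cons, diffCount_self]
  have hp : (a ++ [1]).length = a.length + 1 := by simp
  have hlen : ((a ++ [1]) ++ w :: b).length = (a ++ 0 :: w :: b).length := by simp
  rw [hc'.2.2.2, hp, pow_succ] at hd' hpow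
  rw [hlen] at hlen₁ hlen₂
  refine ⟨d', ?_, by omega, hlen₁, hlen₂, ?_⟩
  · convert hd' using 1
    omega
  · have := diffCount_triangle (a ++ 0 :: w :: b) ((a ++ [1]) ++ w :: b) d'
    omega

/-- Decrementing digit `i` of an extended regular counter: from an extended
regular representation `d` of `n` and an index `i ≤ ℓ - 1` (i.e. `i < ℓ`), we
have `2^i ≤ n`, and one obtains an extended regular representation of `n - 2^i`
whose length is between `ℓ - 2` and `ℓ` and which differs from `d` in at most
`4` positions. -/
theorem stmt_12 (d : List ℕ) (n i : ℕ) (hd : IsExtRegRep d n)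
    (hi : i < d.length) :
    2 ^ i ≤ n ∧
      ∃ d' : List ℕ, IsExtRegRep d' (n - 2 ^ i) ∧
        d.length - 2 ≤ d'.length ∧ d'.length ≤ d.length ∧ diffCount d d' ≤ 4 := by
  obtain ⟨a, v, b, rfl, rfl⟩ : ∃ a v b, d = a ++ v :: b ∧ a.length = i :=
    ⟨d.take i, d[i], d.drop (i + 1),
      by rw [← List.drop_eq_getElem_cons hi, List.take_append_drop], List.length_take_of_le hi.le⟩
  obtain ⟨d', hd', hpow, hlen₁, hlen₂, hdiff⟩ :
      ∃ d', IsDecrement (a ++ v :: b) a.length 4 d' := by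
    rcases eq_or_ne v 0 with rfl | hv
    · exact exists_isDecrement_of_eq_zero hd
    · obtain ⟨d', h⟩ := exists_isDecrement_of_ne_zero hv hd
      exact ⟨d', h.mono (by norm_num)⟩
  obtain rfl := hd.2.2.2
  exact ⟨hpow, d', hd', hlen₁, hlen₂, hdiff⟩
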